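/- Let n ≥ 2, k ≥ 0, and let e = (1, 0, …, 0) ∈ S^{n−1}. The subspace of all harmonic homogeneous polynomials f ∈ Harm_k (in n variables over ℂ) satisfying f(u⁻¹ x) = f(x) for all x ∈ ℝ^n and all orthogonal matrices u ∈ O(n) with u e = e is exactly one-dimensional. -/

import Mathlib

/-!
Write `x = (x₀, x')` with `x' ∈ ℝⁿ⁻¹`. A reflection fixing `e` carries any `x` to
`(x₀, |x'|, 0, …, 0)`, so a zonal `f` is determined by `p(s, t) = f(s, t, 0, …, 0)`, and `p` is even
in `t`. For `f` homogeneous of degree `k` this forces `f = ∑ⱼ cⱼ x₀^(k-2j) |x'|^(2j)`. Since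
`Δ (x₀ᵃ |x'|^(2j+2)) = a(a-1) x₀^(a-2) |x'|^(2j+2) + 2(j+1)(2j+n-1) x₀ᵃ |x'|^(2j)`, harmonicity is
the two-term recurrence `cⱼ (k-2j)(k-2j-1) + cⱼ₊₁ 2(j+1)(2j+n-1) = 0`, which determines every `cⱼ`
from `c₀` and has a solution with `c₀ = 1`.
-/

open MvPolynomial
open scoped Matrix

/-- The Laplace operator `Δ = ∑ i ∂²/∂x_i²` on polynomials in `n` variables. -/
noncomputable def polyLaplacian (n : ℕ) :
    MvPolynomial (Fin n) ℂ →ₗ[ℂ] MvPolynomial (Fin n) ℂ :=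
  ∑ i : Fin n, ((pderiv i).toLinearMap ∘ₗ (pderiv i).toLinearMap)

/-- `Harm_k`: the space of harmonic homogeneous polynomials of degree `k`. -/
noncomputable def harmSubmodule (n k : ℕ) : Submodule ℂ (MvPolynomial (Fin n) ℂ) :=
  homogeneousSubmodule (Fin n) ℂ k ⊓ LinearMap.ker (polyLaplacian n)

/-- The pole `e = (1, 0, …, 0) ∈ ℝ^n`. -/
noncomputable def poleVec (n : ℕ) : Fin n → ℝ := fun i => if (i : ℕ) = 0 then 1 else 0

/-- A polynomial `f` is a zonal function with pole `e`: `f(u⁻¹ x) = f(x)` for all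
`x ∈ ℝ^n` and all orthogonal `u` with `u e = e`. -/
def IsZonal (n : ℕ) (f : MvPolynomial (Fin n) ℂ) : Prop :=
  ∀ u : Matrix.orthogonalGroup (Fin n) ℝ,
    (u : Matrix (Fin n) (Fin n) ℝ) *ᵥ poleVec n = poleVec n →
    ∀ x : Fin n → ℝ,
      eval (fun i => ((((u⁻¹ : Matrix.orthogonalGroup (Fin n) ℝ) :
          Matrix (Fin n) (Fin n) ℝ) *ᵥ x) i : ℂ)) f =
        eval (fun i => ((x i : ℝ) : ℂ)) f

open Matrix WithLp

theorem MvPolynomial.eq_of_eval_ofReal_eq {σ : Type*} {p q : MvPolynomial σ ℂ}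
    (h : ∀ x : σ → ℝ, eval (fun i => (x i : ℂ)) p = eval (fun i => (x i : ℂ)) q) : p = q := by
  refine funext_set (fun _ => Set.range ((↑) : ℝ → ℂ))
    (fun _ => Set.infinite_range_of_injective Complex.ofReal_injective) fun z hz => ?_
  choose x hx using fun i => hz i trivial
  obtain rfl : (fun i => (x i : ℂ)) = z := _root_.funext hx
  exact h x

theorem MvPolynomial.eval_aeval {R σ τ : Type*} [CommSemiring R] (z : τ → R)
    (g : σ → MvPolynomial τ R) (p : MvPolynomial σ R) :
    eval z (aeval g p) = eval (fun i => eval z (g i)) p := by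
  rw [aeval_eq_bind₁, eval, eval₂Hom_bind₁]
  rfl

theorem MvPolynomial.coeff_aeval_C_mul_X {R σ : Type*} [CommSemiring R] (a : σ → R)
    (p : MvPolynomial σ R) (w : σ →₀ ℕ) :
    coeff w (aeval (fun i => C (a i) * X i) p) = (w.prod fun i e => a i ^ e) * coeff w p := by
  classical
  induction p using MvPolynomial.induction_on' with
  | monomial u r =>
    rw [aeval_monomial]
    simp only [mul_pow, Finsupp.prod_mul, ← map_pow, ← map_finsuppProd, algebraMap_eq,
      ← monomial_eq, C_mul_monomial, coeff_monomial]
    split_ifs with h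
    · rw [h, mul_comm]
    · rw [mul_zero]
  | add p q hp hq => rw [map_add, coeff_add, coeff_add, hp, hq, mul_add]

theorem single_zero_add_single_one_eq_iff {a b : ℕ} {w : Fin 2 →₀ ℕ} :
    Finsupp.single 0 a + Finsupp.single 1 b = w ↔ a = w 0 ∧ b = w 1 := by
  constructor
  · rintro rfl
    simp
  · rintro ⟨rfl, rfl⟩
    ext i
    fin_cases i <;> simp

section Orthogonal

variable {ι : Type*} [Fintype ι] [DecidableEq ι]

theorem exists_mem_orthogonalGroup_mulVec_eq {x y : ι → ℝ} (h : x ⬝ᵥ x = y ⬝ᵥ y) :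
    ∃ u ∈ orthogonalGroup ι ℝ, u *ᵥ x = y ∧ ∀ v, (x - y) ⬝ᵥ v = 0 → u *ᵥ v = v := by
  let b := EuclideanSpace.basisFun ι ℝ
  let R := (ℝ ∙ (toLp 2 x - toLp 2 y))ᗮ.reflection
  have hR (v : ι → ℝ) : R.toLinearMap.toMatrix b.toBasis b.toBasis *ᵥ v = ofLp (R (toLp 2 v)) :=
    LinearMap.toMatrix_mulVec_repr _ _ _ _
  refine ⟨_, R.toMatrix_mem_unitaryGroup b b, ?_, fun v hv => ?_⟩
  · have hnorm : ‖toLp 2 x‖ = ‖toLp 2 y‖ := by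
      simp only [EuclideanSpace.norm_eq, Real.norm_eq_abs, sq_abs]
      simp only [dotProduct, ← sq] at h
      rw [h]
    rw [hR, Submodule.reflection_sub hnorm]
  · rw [hR, (Submodule.reflection_eq_self_iff _).mpr]
    rw [Submodule.mem_orthogonal_singleton_iff_inner_right, ← toLp_sub,
      EuclideanSpace.inner_toLp_toLp]
    simpa [dotProduct_comm] using hv

theorem dotProduct_mulVec_self_of_mem_orthogonalGroup {u : Matrix ι ι ℝ}
    (hu : u ∈ orthogonalGroup ι ℝ) (x : ι → ℝ) : (u *ᵥ x) ⬝ᵥ (u *ᵥ x) = x ⬝ᵥ x := by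
  rw [dotProduct_mulVec, ← mulVec_transpose, mulVec_mulVec,
    (mem_orthogonalGroup_iff' _ _).mp hu, one_mulVec]

theorem inv_mulVec_eq_self {u : orthogonalGroup ι ℝ} {v : ι → ℝ} (h : (u : Matrix ι ι ℝ) *ᵥ v = v) :
    ((u⁻¹ : orthogonalGroup ι ℝ) : Matrix ι ι ℝ) *ᵥ v = v := by
  conv_lhs => rw [← h]
  rw [mulVec_mulVec, UnitaryGroup.inv_val, UnitaryGroup.star_mul_self, one_mulVec]

theorem inv_mulVec_apply_of_mulVec_single {u : orthogonalGroup ι ℝ} {i : ι}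
    (h : (u : Matrix ι ι ℝ) *ᵥ Pi.single i 1 = Pi.single i 1) (x : ι → ℝ) :
    (((u⁻¹ : orthogonalGroup ι ℝ) : Matrix ι ι ℝ) *ᵥ x) i = x i := by
  rw [UnitaryGroup.inv_val, star_eq_conjTranspose, conjTranspose_eq_transpose_of_trivial,
    mulVec_transpose, ← dotProduct_single_one (x ᵥ* _), ← dotProduct_mulVec, h,
    dotProduct_single_one]

end Orthogonal

theorem poleVec_succ (m : ℕ) : poleVec (m + 1) = Pi.single 0 1 := by
  ext i
  cases i using Fin.cases <;> simp [poleVec]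

theorem IsZonal.eval_mulVec {n : ℕ} {f : MvPolynomial (Fin n) ℂ} (hf : IsZonal n f)
    {u : orthogonalGroup (Fin n) ℝ} (hu : (u : Matrix (Fin n) (Fin n) ℝ) *ᵥ poleVec n = poleVec n)
    (x : Fin n → ℝ) :
    eval (fun i => (((u : Matrix (Fin n) (Fin n) ℝ) *ᵥ x) i : ℂ)) f =
      eval (fun i => (x i : ℂ)) f := by
  simpa using hf u⁻¹ (inv_mulVec_eq_self hu) x

theorem IsZonal.eval_eq_of_apply_zero_eq {m : ℕ} {f : MvPolynomial (Fin (m + 1)) ℂ}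
    (hf : IsZonal (m + 1) f) {x y : Fin (m + 1) → ℝ} (h₀ : x 0 = y 0) (h : x ⬝ᵥ x = y ⬝ᵥ y) :
    eval (fun i => (x i : ℂ)) f = eval (fun i => (y i : ℂ)) f := by
  obtain ⟨u, hu, rfl, hfix⟩ := exists_mem_orthogonalGroup_mulVec_eq h
  have hpole : u *ᵥ poleVec (m + 1) = poleVec (m + 1) :=
    hfix _ (by rw [poleVec_succ, dotProduct_single_one, Pi.sub_apply, h₀, sub_self])
  exact (hf.eval_mulVec (u := ⟨u, hu⟩) hpole x).symm

def zonalSubalgebra (n : ℕ) : Subalgebra ℂ (MvPolynomial (Fin n) ℂ) where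
  carrier := {f | IsZonal n f}
  mul_mem' hf hg u hu x := by simp only [map_mul, hf u hu x, hg u hu x]
  add_mem' hf hg u hu x := by simp only [map_add, hf u hu x, hg u hu x]
  algebraMap_mem' c u _ x := by simp only [MvPolynomial.algebraMap_eq, eval_C]

theorem isZonal_X_zero (m : ℕ) : IsZonal (m + 1) (X 0) := by
  intro u hu x
  rw [poleVec_succ] at hu
  simp only [eval_X, inv_mulVec_apply_of_mulVec_single hu]

theorem isZonal_sum_X_sq (n : ℕ) : IsZonal n (∑ i, X i ^ 2) := by
  intro u _ x
  have h := dotProduct_mulVec_self_of_mem_orthogonalGroup (u⁻¹).2 x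
  simp only [dotProduct] at h
  simpa [sq] using congrArg ((↑) : ℝ → ℂ) h

noncomputable def tailSq (m : ℕ) : MvPolynomial (Fin (m + 1)) ℂ :=
  ∑ i : Fin m, X i.succ ^ 2

theorem X_zero_sq_add_tailSq (m : ℕ) : X 0 ^ 2 + tailSq m = ∑ i, X i ^ 2 := by
  rw [Fin.sum_univ_succ, tailSq]

theorem isZonal_tailSq (m : ℕ) : IsZonal (m + 1) (tailSq m) := by
  have := (zonalSubalgebra _).sub_mem (isZonal_sum_X_sq (m + 1))
    ((zonalSubalgebra _).pow_mem (isZonal_X_zero m) 2)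
  rwa [← X_zero_sq_add_tailSq, add_sub_cancel_left] at this

theorem isHomogeneous_tailSq (m : ℕ) : (tailSq m).IsHomogeneous 2 :=
  IsHomogeneous.sum _ _ _ fun _ _ => isHomogeneous_X_pow _ _

noncomputable def zonalForm (m k : ℕ) (c : ℕ → ℂ) : MvPolynomial (Fin (m + 1)) ℂ :=
  ∑ j ∈ Finset.range (k / 2 + 1), c j • (X 0 ^ (k - 2 * j) * tailSq m ^ j)

section ZonalForm

variable {m k : ℕ} {c : ℕ → ℂ}

theorem isZonal_zonalForm : IsZonal (m + 1) (zonalForm m k c) :=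
  (zonalSubalgebra _).sum_mem fun _ _ => Subalgebra.smul_mem _
    (Subalgebra.mul_mem _ (Subalgebra.pow_mem _ (isZonal_X_zero m) _)
      (Subalgebra.pow_mem _ (isZonal_tailSq m) _)) _

theorem isHomogeneous_zonalForm : (zonalForm m k c).IsHomogeneous k := by
  refine IsHomogeneous.sum _ _ _ fun j hj => ?_
  have h2j : 2 * j ≤ k := by have := Finset.mem_range.mp hj; omega
  have := (isHomogeneous_X_pow (0 : Fin (m + 1)) (k - 2 * j)).mul
    ((isHomogeneous_tailSq m).pow j)
  rw [Nat.sub_add_cancel h2j] at this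
  rw [smul_eq_C_mul]
  exact this.C_mul _

theorem eval_single_zero_zonalForm : eval (Pi.single 0 1) (zonalForm m k c) = c 0 := by
  simp [zonalForm, tailSq, Finset.sum_range_succ']

end ZonalForm

section Laplacian

variable {m : ℕ}

theorem polyLaplacian_succ_apply (p : MvPolynomial (Fin (m + 1)) ℂ) :
    polyLaplacian (m + 1) p =
      pderiv 0 (pderiv 0 p) + ∑ i : Fin m, pderiv i.succ (pderiv i.succ p) := by
  simp [polyLaplacian, Fin.sum_univ_succ]

theorem pderiv_zero_tailSq : pderiv 0 (tailSq m) = 0 := by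
  simp [tailSq, pderiv_X, Fin.succ_ne_zero]

theorem pderiv_succ_tailSq (i : Fin m) : pderiv i.succ (tailSq m) = 2 * X i.succ := by
  simp [tailSq, pderiv_X, Pi.single_apply, Fin.succ_inj]

theorem sum_X_mul_pderiv_tailSq_pow (j : ℕ) :
    ∑ i : Fin m, X i.succ * pderiv i.succ (tailSq m ^ j) = (2 * j : ℂ) • tailSq m ^ j := by
  have h := ((isHomogeneous_tailSq m).pow j).sum_X_mul_pderiv
  rw [Fin.sum_univ_succ, pderiv_pow, pderiv_zero_tailSq, mul_zero, mul_zero, zero_add] at h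
  rw [h, nsmul_eq_mul, smul_eq_C_mul, map_mul, map_ofNat, map_natCast, Nat.cast_mul,
    Nat.cast_ofNat]

theorem sum_pderiv_pderiv_tailSq_pow_succ (j : ℕ) :
    ∑ i : Fin m, pderiv i.succ (pderiv i.succ (tailSq m ^ (j + 1))) =
      ((2 * (j + 1) * (2 * j + m) : ℕ) : ℂ) • tailSq m ^ j := by
  have hterm (i : Fin m) : pderiv i.succ (pderiv i.succ (tailSq m ^ (j + 1))) =
      C (2 * (j + 1) : ℂ) * (X i.succ * pderiv i.succ (tailSq m ^ j) + tailSq m ^ j) := by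
    rw [pderiv_pow, pderiv_succ_tailSq, Nat.add_sub_cancel,
      show ((j + 1 : ℕ) : MvPolynomial (Fin (m + 1)) ℂ) * tailSq m ^ j * (2 * X i.succ) =
        C (2 * (j + 1) : ℂ) * (tailSq m ^ j * X i.succ) by
        simp only [map_mul, map_add, map_one, map_ofNat, map_natCast]; push_cast; ring,
      pderiv_C_mul, pderiv_mul, pderiv_X_self]
    ring
  rw [Finset.sum_congr rfl fun i _ => hterm i, ← Finset.mul_sum, Finset.sum_add_distrib,
    sum_X_mul_pderiv_tailSq_pow, Finset.sum_const, Finset.card_univ, Fintype.card_fin,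
    smul_eq_C_mul, smul_eq_C_mul, nsmul_eq_mul]
  simp only [map_mul, map_add, map_one, map_natCast, map_ofNat]
  push_cast
  ring

theorem polyLaplacian_X_zero_pow_mul {g : MvPolynomial (Fin (m + 1)) ℂ} (hg : pderiv 0 g = 0)
    (a : ℕ) :
    polyLaplacian (m + 1) (X 0 ^ a * g) = ((a * (a - 1) : ℕ) : ℂ) • (X 0 ^ (a - 2) * g) +
      X 0 ^ a * ∑ i : Fin m, pderiv i.succ (pderiv i.succ g) := by
  have htail (p : MvPolynomial (Fin (m + 1)) ℂ) (i : Fin m) :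
      pderiv i.succ (X 0 ^ a * p) = X 0 ^ a * pderiv i.succ p := by
    rw [pderiv_mul, pderiv_pow, pderiv_X_of_ne (Fin.succ_ne_zero i).symm]
    ring
  simp only [polyLaplacian_succ_apply, htail, Finset.mul_sum, pderiv_mul, pderiv_pow,
    pderiv_X_self, hg]
  rw [mul_one, mul_zero, add_zero, ← map_natCast C, mul_assoc, pderiv_C_mul, pderiv_mul,
    pderiv_pow, pderiv_X_self, hg, Nat.sub_sub, smul_eq_C_mul, Nat.cast_mul, map_mul,
    map_natCast, map_natCast]
  ring

theorem polyLaplacian_zonalForm (k : ℕ) (c : ℕ → ℂ) :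
    polyLaplacian (m + 1) (zonalForm m (k + 2) c) =
      zonalForm m k fun j => c j * (((k + 2 - 2 * j) * (k + 2 - 2 * j - 1) : ℕ) : ℂ) +
        c (j + 1) * ((2 * (j + 1) * (2 * j + m) : ℕ) : ℂ) := by
  have hterm (j : ℕ) : polyLaplacian (m + 1) (X 0 ^ (k + 2 - 2 * j) * tailSq m ^ j) =
      (((k + 2 - 2 * j) * (k + 2 - 2 * j - 1) : ℕ) : ℂ) • (X 0 ^ (k - 2 * j) * tailSq m ^ j) +
      X 0 ^ (k + 2 - 2 * j) * ∑ i : Fin m, pderiv i.succ (pderiv i.succ (tailSq m ^ j)) := by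
    rw [polyLaplacian_X_zero_pow_mul (by rw [pderiv_pow, pderiv_zero_tailSq, mul_zero]),
      show k + 2 - 2 * j - 2 = k - 2 * j by omega]
  have hlast : ((k + 2 - 2 * (k / 2 + 1)) * (k + 2 - 2 * (k / 2 + 1) - 1) : ℕ) = 0 :=
    Nat.mul_eq_zero.mpr (by omega)
  -- The top term of the `∂₀²` part has `x₀`-exponent at most 1 and the `j = 0` tail term is
  -- `Δ' 1 = 0`; shifting the tail sum then pairs `cⱼ` with `cⱼ₊₁`.
  simp only [zonalForm, map_sum, map_smul, hterm, smul_add, Finset.sum_add_distrib]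
  rw [show (k + 2) / 2 + 1 = k / 2 + 1 + 1 by omega, Finset.sum_range_succ, hlast,
    Finset.sum_range_succ' (fun j => c j • (X 0 ^ (k + 2 - 2 * j) *
      ∑ i : Fin m, pderiv i.succ (pderiv i.succ (tailSq m ^ j))))]
  simp only [Nat.cast_zero, zero_smul, smul_zero, add_zero, pow_zero, pderiv_one, map_zero,
    Finset.sum_const_zero, mul_zero, sum_pderiv_pderiv_tailSq_pow_succ, ← Finset.sum_add_distrib]
  refine Finset.sum_congr rfl fun j _ => ?_
  rw [show k + 2 - 2 * (j + 1) = k - 2 * j by omega, mul_smul_comm, smul_smul, smul_smul,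
    add_smul]

end Laplacian

section Recurrence

variable {m k : ℕ}

def HarmonicRecurrence (m k : ℕ) (c : ℕ → ℂ) : Prop :=
  ∀ j < k / 2, c j * (((k - 2 * j) * (k - 2 * j - 1) : ℕ) : ℂ) +
    c (j + 1) * ((2 * (j + 1) * (2 * j + m) : ℕ) : ℂ) = 0

noncomputable def zonalCoeff (m k : ℕ) : ℕ → ℂ
  | 0 => 1
  | j + 1 => -((((k - 2 * j) * (k - 2 * j - 1) : ℕ) : ℂ) /
      ((2 * (j + 1) * (2 * j + m) : ℕ) : ℂ)) * zonalCoeff m k j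

theorem harmonicRecurrence_zonalCoeff (hm : m ≠ 0) : HarmonicRecurrence m k (zonalCoeff m k) := by
  intro j _
  have hB : ((2 * (j + 1) * (2 * j + m) : ℕ) : ℂ) ≠ 0 := Nat.cast_ne_zero.mpr (by positivity)
  rw [zonalCoeff]
  field_simp
  ring

theorem HarmonicRecurrence.eq_mul_zonalCoeff (hm : m ≠ 0) {c : ℕ → ℂ}
    (h : HarmonicRecurrence m k c) : ∀ j ≤ k / 2, c j = c 0 * zonalCoeff m k j
  | 0, _ => by rw [zonalCoeff, mul_one]
  | j + 1, hj => by
    have ih := h.eq_mul_zonalCoeff hm j (by omega)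
    have hB : ((2 * (j + 1) * (2 * j + m) : ℕ) : ℂ) ≠ 0 := Nat.cast_ne_zero.mpr (by positivity)
    refine mul_right_cancel₀ hB ?_
    linear_combination h j (by omega) -
      c 0 * harmonicRecurrence_zonalCoeff (k := k) hm j (by omega) -
      (((k - 2 * j) * (k - 2 * j - 1) : ℕ) : ℂ) * ih

theorem HarmonicRecurrence.zonalForm_eq_smul (hm : m ≠ 0) {c : ℕ → ℂ}
    (h : HarmonicRecurrence m k c) : zonalForm m k c = c 0 • zonalForm m k (zonalCoeff m k) := by
  simp only [zonalForm, Finset.smul_sum, smul_smul]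
  refine Finset.sum_congr rfl fun j hj => ?_
  rw [h.eq_mul_zonalCoeff hm j (by have := Finset.mem_range.mp hj; omega)]

end Recurrence

noncomputable def planeRestrict (m : ℕ) :
    MvPolynomial (Fin (m + 2)) ℂ →ₐ[ℂ] MvPolynomial (Fin 2) ℂ :=
  aeval (Fin.cons (X 0) (Fin.cons (X 1) 0))

noncomputable def evenForm (k : ℕ) (c : ℕ → ℂ) : MvPolynomial (Fin 2) ℂ :=
  ∑ j ∈ Finset.range (k / 2 + 1), c j • (X 0 ^ (k - 2 * j) * X 1 ^ (2 * j))

section Plane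

variable {m k : ℕ}

theorem planeRestrict_zonalForm (c : ℕ → ℂ) :
    planeRestrict m (zonalForm (m + 1) k c) = evenForm k c := by
  simp [planeRestrict, zonalForm, evenForm, tailSq, Fin.sum_univ_succ, pow_mul]

theorem eval_ofReal_planeRestrict (z : Fin 2 → ℝ) (f : MvPolynomial (Fin (m + 2)) ℂ) :
    eval (fun i => (z i : ℂ)) (planeRestrict m f) =
      eval (fun i => ((Fin.cons (z 0) (Fin.cons (z 1) 0) : Fin (m + 2) → ℝ) i : ℂ)) f := by
  rw [planeRestrict, eval_aeval]
  refine congrArg (fun x => eval x f) (funext fun i => ?_)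
  cases i using Fin.cases with
  | zero => simp
  | succ i => cases i using Fin.cases <;> simp

theorem coeff_evenForm (c : ℕ → ℂ) (w : Fin 2 →₀ ℕ) :
    coeff w (evenForm k c) = if w 0 + w 1 = k ∧ Even (w 1) then c (w 1 / 2) else 0 := by
  have hmono (j : ℕ) : (X 0 ^ (k - 2 * j) * X 1 ^ (2 * j) : MvPolynomial (Fin 2) ℂ) =
      monomial (Finsupp.single 0 (k - 2 * j) + Finsupp.single 1 (2 * j)) 1 := by
    rw [X_pow_eq_monomial, X_pow_eq_monomial, monomial_mul, one_mul]
  simp only [evenForm, coeff_sum, coeff_smul, hmono, coeff_monomial,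
    single_zero_add_single_one_eq_iff, smul_eq_mul, mul_ite, mul_one, mul_zero]
  split_ifs with h
  · obtain ⟨hk, j, hj⟩ := h
    rw [Finset.sum_eq_single_of_mem (w 1 / 2) (Finset.mem_range.mpr (by omega))
      fun i _ hi => if_neg (by omega), if_pos (by omega)]
  · exact Finset.sum_eq_zero fun j hj =>
      if_neg fun h' => h ⟨by have := Finset.mem_range.mp hj; omega, ⟨j, by omega⟩⟩

theorem eq_evenForm_of_isHomogeneous {p : MvPolynomial (Fin 2) ℂ} (hp : p.IsHomogeneous k)
    (hodd : ∀ w : Fin 2 →₀ ℕ, Odd (w 1) → coeff w p = 0) :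
    p = evenForm k fun j => coeff (Finsupp.single 0 (k - 2 * j) + Finsupp.single 1 (2 * j)) p := by
  ext w
  rw [coeff_evenForm]
  split_ifs with h
  · obtain ⟨hk, j, hj⟩ := h
    rw [(single_zero_add_single_one_eq_iff (w := w)).mpr ⟨by omega, by omega⟩]
  · by_cases hw : Odd (w 1)
    · exact hodd w hw
    · refine hp.coeff_eq_zero fun hdeg => h ⟨?_, Nat.not_odd_iff_even.mp hw⟩
      rwa [Finsupp.degree_eq_sum, Fin.sum_univ_two] at hdeg

theorem IsZonal.eval_eq_eval_planeRestrict {f : MvPolynomial (Fin (m + 2)) ℂ}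
    (hf : IsZonal (m + 2) f) (x : Fin (m + 2) → ℝ) :
    eval (fun i => (x i : ℂ)) f =
      eval (fun i => (![x 0, √(∑ i : Fin (m + 1), x i.succ ^ 2)] i : ℂ)) (planeRestrict m f) := by
  set ρ := √(∑ i : Fin (m + 1), x i.succ ^ 2) with hρ
  have hy : ∑ i, (Fin.cons (x 0) (Fin.cons ρ 0) : Fin (m + 2) → ℝ) i ^ 2 = x 0 ^ 2 + ρ ^ 2 := by
    simp [Fin.sum_univ_succ]
  rw [eval_ofReal_planeRestrict]
  refine hf.eval_eq_of_apply_zero_eq rfl ?_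
  simp only [dotProduct, ← sq, Matrix.cons_val_zero, Matrix.cons_val_one]
  rw [hy, hρ, Real.sq_sqrt (Finset.sum_nonneg fun _ _ => sq_nonneg _), Fin.sum_univ_succ]

theorem IsZonal.eq_of_planeRestrict_eq {f g : MvPolynomial (Fin (m + 2)) ℂ}
    (hf : IsZonal (m + 2) f) (hg : IsZonal (m + 2) g) (h : planeRestrict m f = planeRestrict m g) :
    f = g :=
  eq_of_eval_ofReal_eq fun x => by
    rw [hf.eval_eq_eval_planeRestrict, hg.eval_eq_eval_planeRestrict, h]

theorem IsZonal.coeff_planeRestrict_eq_zero {f : MvPolynomial (Fin (m + 2)) ℂ}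
    (hf : IsZonal (m + 2) f) {w : Fin 2 →₀ ℕ} (hw : Odd (w 1)) :
    coeff w (planeRestrict m f) = 0 := by
  have hflip : aeval (fun i => C (![1, -1] i) * X i) (planeRestrict m f) = planeRestrict m f := by
    refine eq_of_eval_ofReal_eq fun z => ?_
    have hpt : (fun i => eval (fun i => (z i : ℂ)) (C (![1, -1] i) * X i)) =
        fun i => ((![z 0, -z 1] i : ℝ) : ℂ) := by
      funext i
      fin_cases i <;> simp
    rw [eval_aeval, hpt, eval_ofReal_planeRestrict, eval_ofReal_planeRestrict]
    exact hf.eval_eq_of_apply_zero_eq rfl (by simp [dotProduct, Fin.sum_univ_succ])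
  have := coeff_aeval_C_mul_X ![1, -1] (planeRestrict m f) w
  rw [hflip, Finsupp.prod_fintype _ _ (by simp), Fin.prod_univ_two] at this
  simp only [Matrix.cons_val_zero, Matrix.cons_val_one, one_pow, hw.neg_one_pow, one_mul,
    neg_one_mul] at this
  exact CharZero.eq_neg_self_iff.mp this

end Plane

section Uniqueness

variable {m k : ℕ}

theorem isHomogeneous_planeRestrict {f : MvPolynomial (Fin (m + 2)) ℂ} (hf : f.IsHomogeneous k) :
    (planeRestrict m f).IsHomogeneous k := by
  have hvars (i : Fin (m + 2)) :
      ((Fin.cons (X 0) (Fin.cons (X 1) 0) : Fin (m + 2) → MvPolynomial (Fin 2) ℂ) i).IsHomogeneous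
        1 := by
    cases i using Fin.cases with
    | zero => exact isHomogeneous_X _ _
    | succ i => cases i using Fin.cases with
      | zero => exact isHomogeneous_X _ _
      | succ i => exact isHomogeneous_zero _ _ _
  simpa only [planeRestrict, one_mul] using hf.aeval _ hvars

theorem IsZonal.exists_eq_zonalForm {f : MvPolynomial (Fin (m + 2)) ℂ} (hf : IsZonal (m + 2) f)
    (hk : f.IsHomogeneous k) : ∃ c, f = zonalForm (m + 1) k c :=
  ⟨_, hf.eq_of_planeRestrict_eq isZonal_zonalForm <| by
    rw [planeRestrict_zonalForm]
    exact eq_evenForm_of_isHomogeneous (isHomogeneous_planeRestrict hk) fun _ =>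
      hf.coeff_planeRestrict_eq_zero⟩

theorem zonalForm_eq_zero_iff (hm : m ≠ 0) {c : ℕ → ℂ} :
    zonalForm m k c = 0 ↔ ∀ j ≤ k / 2, c j = 0 := by
  refine ⟨fun h j hj => ?_, fun h => Finset.sum_eq_zero fun j hj => ?_⟩
  · obtain ⟨m, rfl⟩ := Nat.exists_eq_succ_of_ne_zero hm
    have := congrArg (coeff (Finsupp.single 0 (k - 2 * j) + Finsupp.single 1 (2 * j)) ∘
      planeRestrict m) h
    rw [Function.comp_apply, Function.comp_apply, planeRestrict_zonalForm, coeff_evenForm,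
      map_zero (planeRestrict m), coeff_zero, if_pos ⟨by simp; omega, by simp⟩] at this
    simpa using this
  · rw [h j (by have := Finset.mem_range.mp hj; omega), zero_smul]

theorem polyLaplacian_zonalForm_eq_zero_iff (hm : m ≠ 0) {c : ℕ → ℂ} :
    polyLaplacian (m + 1) (zonalForm m k c) = 0 ↔ HarmonicRecurrence m k c := by
  obtain _ | _ | k := k
  · simp [HarmonicRecurrence, zonalForm, polyLaplacian_succ_apply]
  · simp [HarmonicRecurrence, zonalForm, polyLaplacian_succ_apply, Fin.succ_ne_zero]
  · rw [polyLaplacian_zonalForm, zonalForm_eq_zero_iff hm]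
    exact ⟨fun h j hj => h j (by omega), fun h j hj => h j (by omega)⟩

end Uniqueness

/-- the subspace of zonal functions with pole `e = (1,0,…,0)` inside
`Harm_k` is exactly one-dimensional. -/
theorem harm_zonal_one_dimensional (n k : ℕ) (hn : 2 ≤ n) :
    ∃ f₀ : MvPolynomial (Fin n) ℂ,
      f₀ ∈ harmSubmodule n k ∧ IsZonal n f₀ ∧ f₀ ≠ 0 ∧
      ∀ f ∈ harmSubmodule n k, IsZonal n f → ∃ c : ℂ, f = c • f₀ := by
  obtain ⟨m, rfl⟩ : ∃ m, n = m + 2 := ⟨n - 2, by omega⟩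
  have hm : m + 1 ≠ 0 := m.succ_ne_zero
  refine ⟨zonalForm (m + 1) k (zonalCoeff (m + 1) k),
    ⟨isHomogeneous_zonalForm, (polyLaplacian_zonalForm_eq_zero_iff hm).mpr
      (harmonicRecurrence_zonalCoeff hm)⟩, isZonal_zonalForm, fun h => ?_, ?_⟩
  · simpa [eval_single_zero_zonalForm, zonalCoeff] using congrArg (eval (Pi.single 0 1)) h
  · rintro f ⟨hhom, hharm⟩ hf
    obtain ⟨c, rfl⟩ := hf.exists_eq_zonalForm hhom
    exact ⟨c 0, ((polyLaplacian_zonalForm_eq_zero_iff hm).mp hharm).zonalForm_eq_smul hm⟩
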